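/- Let M be a d×d real orthogonal matrix with M² = I (an involutive relabeling), let X, Y ∈ ℝ^{n×d}, and form the combined (pooled) dataset with training matrices X_C = [X; X Mᵀ] and Y_C = [Y; Y Mᵀ] (vertical block concatenation, in ℝ^{2n×d}). Suppose X_C has full column rank, so the least-squares problem min_A ‖Y_C − X_C Aᵀ‖_F has a unique minimizer A_C. Then A_C is equivariant under the relabeling: M A_C Mᵀ = A_C. -/

import Mathlib

/-!
An orthogonal involution is symmetric. The least-squares objective `A ↦ ‖Y_C − X_C Aᵀ‖_F` is
invariant under `A ↦ M A Mᵀ`: conjugating by `M` maps the residual on the normal rows to the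
residual on the mirrored rows and vice versa, up to right multiplication by the orthogonal
matrix `M`, which preserves the Frobenius norm.
So `M A_C Mᵀ` is a minimizer as well, and uniqueness forces `M A_C Mᵀ = A_C`.
-/

open Matrix

/-- The Frobenius norm of a real matrix. -/
noncomputable def frob {m n : Type*} [Fintype m] [Fintype n] (A : Matrix m n ℝ) : ℝ :=
  Real.sqrt (∑ i, ∑ j, (A i j) ^ 2)

theorem eq_of_unique_minimizer_of_comp_eq {α β : Type*} [Preorder β] {f : α → β} {g : α → α}
    (hfg : ∀ a, f (g a) = f a) (hg : Function.Surjective g) {a : α} (ha : ∀ b, f a ≤ f b)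
    (huniq : ∀ b, (∀ c, f b ≤ f c) → b = a) : g a = a := by
  refine huniq (g a) fun c => ?_
  obtain ⟨c, rfl⟩ := hg c
  rw [hfg, hfg]
  exact ha c

theorem Matrix.transpose_eq_self_of_mul_transpose_eq_one {n R : Type*} [Fintype n]
    [DecidableEq n] [Semiring R] {N : Matrix n n R} (hN : N * Nᵀ = 1) (hN2 : N * N = 1) :
    Nᵀ = N := by
  calc Nᵀ = N * N * Nᵀ := by rw [hN2, Matrix.one_mul]
    _ = N := by rw [Matrix.mul_assoc, hN, Matrix.mul_one]

theorem Matrix.fromRows_sub {m₁ m₂ n R : Type*} [Sub R] (P P' : Matrix m₁ n R)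
    (Q Q' : Matrix m₂ n R) :
    fromRows P Q - fromRows P' Q' = fromRows (P - P') (Q - Q') := by
  ext (i | i) j <;> rfl

section Frobenius

variable {m m' n : Type*} [Fintype m] [Fintype m'] [Fintype n]

theorem sum_sq_eq_trace_mul_transpose (A : Matrix m n ℝ) :
    ∑ i, ∑ j, A i j ^ 2 = (A * Aᵀ).trace := by
  simp [Matrix.trace, Matrix.mul_apply, sq]

theorem frob_mul_of_mul_transpose_eq_one [DecidableEq n] (P : Matrix m n ℝ)
    {M : Matrix n n ℝ} (hM : M * Mᵀ = 1) : frob (P * M) = frob P := by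
  unfold frob
  rw [sum_sq_eq_trace_mul_transpose, sum_sq_eq_trace_mul_transpose, transpose_mul,
    Matrix.mul_assoc, ← Matrix.mul_assoc M, hM, Matrix.one_mul]

theorem frob_fromRows_comm (P : Matrix m n ℝ) (Q : Matrix m' n ℝ) :
    frob (fromRows P Q) = frob (fromRows Q P) := by
  unfold frob
  simp only [Fintype.sum_sum_type, fromRows_apply_inl, fromRows_apply_inr, add_comm]

end Frobenius

theorem Matrix.mul_mul_involutive {n p R : Type*} [Fintype n] [Fintype p] [DecidableEq n]
    [DecidableEq p] [Semiring R] {N : Matrix n n R} {P : Matrix p p R} (hN : N * N = 1)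
    (hP : P * P = 1) : Function.Involutive fun A : Matrix n p R => N * A * P := by
  intro A
  simp only [← Matrix.mul_assoc, hN, Matrix.one_mul]
  rw [Matrix.mul_assoc, hP, Matrix.mul_one]

theorem frob_pooled_residual_conj {m d e : Type*} [Fintype m] [Fintype d] [Fintype e]
    [DecidableEq d] [DecidableEq e] {P : Matrix d d ℝ} {N : Matrix e e ℝ} (hP : P * P = 1)
    (hN : N * Nᵀ = 1) (hN2 : N * N = 1) (X : Matrix m d ℝ) (Y : Matrix m e ℝ)
    (A : Matrix e d ℝ) :
    frob (fromRows Y (Y * N) - fromRows X (X * P) * (N * A * Pᵀ)ᵀ) =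
      frob (fromRows Y (Y * N) - fromRows X (X * P) * Aᵀ) := by
  have hNT : Nᵀ = N := transpose_eq_self_of_mul_transpose_eq_one hN hN2
  have hconjT : (N * A * Pᵀ)ᵀ = P * Aᵀ * N := by
    rw [transpose_mul, transpose_mul, transpose_transpose, hNT, Matrix.mul_assoc]
  have htop : Y - X * (P * Aᵀ * N) = (Y * N - X * P * Aᵀ) * N := by
    rw [Matrix.sub_mul, Matrix.mul_assoc Y, hN2, Matrix.mul_one]
    simp only [Matrix.mul_assoc]
  have hbot : Y * N - X * P * (P * Aᵀ * N) = (Y - X * Aᵀ) * N := by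
    rw [Matrix.sub_mul]
    simp only [Matrix.mul_assoc]
    rw [← Matrix.mul_assoc P, hP, Matrix.one_mul]
  rw [hconjT, fromRows_mul, fromRows_mul, fromRows_sub, fromRows_sub, htop, hbot,
    ← fromRows_mul, frob_mul_of_mul_transpose_eq_one _ hN, frob_fromRows_comm]

theorem combined_fit_is_symmetric_general {d n : ℕ}
    (M : Matrix (Fin d) (Fin d) ℝ) (hM : Mᵀ * M = 1) (hM2 : M * M = 1)
    (X Y : Matrix (Fin n) (Fin d) ℝ)
    (AC : Matrix (Fin d) (Fin d) ℝ)
    (hAC : ∀ B : Matrix (Fin d) (Fin d) ℝ,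
      frob (Matrix.fromRows Y (Y * Mᵀ) - Matrix.fromRows X (X * Mᵀ) * ACᵀ) ≤
        frob (Matrix.fromRows Y (Y * Mᵀ) - Matrix.fromRows X (X * Mᵀ) * Bᵀ))
    (hACuniq : ∀ B : Matrix (Fin d) (Fin d) ℝ,
      (∀ C : Matrix (Fin d) (Fin d) ℝ,
        frob (Matrix.fromRows Y (Y * Mᵀ) - Matrix.fromRows X (X * Mᵀ) * Bᵀ) ≤
          frob (Matrix.fromRows Y (Y * Mᵀ) - Matrix.fromRows X (X * Mᵀ) * Cᵀ)) → B = AC) :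
    M * AC * Mᵀ = AC := by
  have hMT : Mᵀ = M := transpose_eq_self_of_mul_transpose_eq_one (mul_eq_one_comm.mp hM) hM2
  have hMTMT : Mᵀ * Mᵀ = 1 := by rw [hMT, hM2]
  have hMTM : Mᵀ * Mᵀᵀ = 1 := by rw [transpose_transpose, hM]
  have hfix : Mᵀ * AC * Mᵀᵀ = AC :=
    eq_of_unique_minimizer_of_comp_eq (frob_pooled_residual_conj hMTMT hMTM hMTMT X Y)
      (mul_mul_involutive hMTMT hM2).surjective hAC hACuniq
  simpa only [transpose_transpose, hMT] using hfix

/-- The unique least-squares model fitted to the pooled dataset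
`X_C = [X; X Mᵀ]`, `Y_C = [Y; Y Mᵀ]` (normal data stacked on top of mirrored data,
with `M` an orthogonal involution) is equivariant under the relabeling:
`M A_C Mᵀ = A_C`. -/
theorem combined_fit_is_symmetric {d n : ℕ}
    (M : Matrix (Fin d) (Fin d) ℝ) (hM : Mᵀ * M = 1) (hM2 : M * M = 1)
    (X Y : Matrix (Fin n) (Fin d) ℝ)
    (hrank : IsUnit ((Matrix.fromRows X (X * Mᵀ))ᵀ * Matrix.fromRows X (X * Mᵀ)))
    (AC : Matrix (Fin d) (Fin d) ℝ)
    (hAC : ∀ B : Matrix (Fin d) (Fin d) ℝ,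
      frob (Matrix.fromRows Y (Y * Mᵀ) - Matrix.fromRows X (X * Mᵀ) * ACᵀ) ≤
        frob (Matrix.fromRows Y (Y * Mᵀ) - Matrix.fromRows X (X * Mᵀ) * Bᵀ))
    (hACuniq : ∀ B : Matrix (Fin d) (Fin d) ℝ,
      (∀ C : Matrix (Fin d) (Fin d) ℝ,
        frob (Matrix.fromRows Y (Y * Mᵀ) - Matrix.fromRows X (X * Mᵀ) * Bᵀ) ≤
          frob (Matrix.fromRows Y (Y * Mᵀ) - Matrix.fromRows X (X * Mᵀ) * Cᵀ)) → B = AC) :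
    M * AC * Mᵀ = AC :=
  combined_fit_is_symmetric_general M hM hM2 X Y AC hAC hACuniq
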